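/- (Lemma 8, part 1.) Suppose X ∈ ℂ^{n1×n2} is the data matrix of the 2-D spectral model satisfying the incoherence property with parameter μ1, with enhanced form X_e = U Λ V* (compact SVD). Then ‖U V*‖_{A,∞} ≤ μ1·c_s·r/(n1 n2); in fact every entry of U V* has modulus at most μ1·c_s·r/(n1 n2). -/

import Mathlib

open scoped Classical
open Matrix

noncomputable section

namespace EMaC

/-- `e^{2π i f}` -/
def efreq (f : ℝ) : ℂ := Complex.exp (2 * Real.pi * Complex.I * (f : ℂ))

/-- The data matrix of the 2-D spectral model:
`X_{k,l} = Σ_i d_i y_i^k z_i^l` with `y_i = e^{2πi f1 i}`, `z_i = e^{2πi f2 i}`. -/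
def dataMatrix (n1 n2 r : ℕ) (d : Fin r → ℂ) (f1 f2 : Fin r → ℝ) :
    Matrix (Fin n1) (Fin n2) ℂ :=
  Matrix.of fun k l => ∑ i : Fin r, d i * efreq (f1 i) ^ (k : ℕ) * efreq (f2 i) ^ (l : ℕ)

/-- Frequencies lie in `[0,1)²` and the `r` frequency pairs are distinct. -/
structure SpectralModel (r : ℕ) (f1 f2 : Fin r → ℝ) : Prop where
  f1_mem : ∀ i, f1 i ∈ Set.Ico (0 : ℝ) 1
  f2_mem : ∀ i, f2 i ∈ Set.Ico (0 : ℝ) 1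
  distinct : Function.Injective fun i => (f1 i, f2 i)

/-- The two-fold Hankel enhanced form of an `n1 × n2` matrix, with pencil
parameters `k1, k2`. -/
def enhance {n1 n2 : ℕ} (k1 k2 : ℕ) (hk1 : k1 ≤ n1) (hk2 : k2 ≤ n2)
    (M : Matrix (Fin n1) (Fin n2) ℂ) :
    Matrix (Fin k1 × Fin k2) (Fin (n1 - k1 + 1) × Fin (n2 - k2 + 1)) ℂ :=
  Matrix.of fun ip jq =>
    M ⟨ip.1.1 + jq.1.1, by have h1 := ip.1.isLt; have h2 := jq.1.isLt; omega⟩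
      ⟨ip.2.1 + jq.2.1, by have h1 := ip.2.isLt; have h2 := jq.2.isLt; omega⟩

/-- The matrix `E_L`. -/
def EL (r k1 k2 : ℕ) (f1 f2 : Fin r → ℝ) : Matrix (Fin k1 × Fin k2) (Fin r) ℂ :=
  Matrix.of fun ip s =>
    efreq (f1 s) ^ (ip.1 : ℕ) * efreq (f2 s) ^ (ip.2 : ℕ) /
      (Real.sqrt ((k1 : ℝ) * k2) : ℂ)

/-- The matrix `E_R`. -/
def ER (n1 n2 r k1 k2 : ℕ) (f1 f2 : Fin r → ℝ) :
    Matrix (Fin r) (Fin (n1 - k1 + 1) × Fin (n2 - k2 + 1)) ℂ :=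
  Matrix.of fun s jq =>
    efreq (f1 s) ^ (jq.1 : ℕ) * efreq (f2 s) ^ (jq.2 : ℕ) /
      (Real.sqrt (((n1 - k1 + 1 : ℕ) : ℝ) * ((n2 - k2 + 1 : ℕ) : ℝ)) : ℂ)

/-- Smallest singular value of a square complex matrix. -/
def sigmaMin {n : Type*} [Fintype n] [DecidableEq n] (M : Matrix n n ℂ) : ℝ :=
  ⨅ i, Real.sqrt ((Matrix.isHermitian_conjTranspose_mul_self M).eigenvalues i)

/-- The incoherence property with parameter `μ1`:
`σ_min(G_L) ≥ 1/μ1` and `σ_min(G_R) ≥ 1/μ1`, where `G_L = E_L* E_L` and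
`G_R = (E_R E_R*)ᵀ`. -/
def Incoherent (n1 n2 r k1 k2 : ℕ) (f1 f2 : Fin r → ℝ) (μ1 : ℝ) : Prop :=
  1 / μ1 ≤ sigmaMin ((EL r k1 k2 f1 f2)ᴴ * EL r k1 k2 f1 f2) ∧
    1 / μ1 ≤ sigmaMin ((ER n1 n2 r k1 k2 f1 f2 * (ER n1 n2 r k1 k2 f1 f2)ᴴ)ᵀ)

/-- `c_s = max{n1 n2/(k1 k2), n1 n2/((n1-k1+1)(n2-k2+1))}`. -/
def cs (n1 n2 k1 k2 : ℕ) : ℝ :=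
  max (((n1 : ℝ) * n2) / ((k1 : ℝ) * k2))
    (((n1 : ℝ) * n2) / (((n1 - k1 + 1 : ℕ) : ℝ) * ((n2 - k2 + 1 : ℕ) : ℝ)))

/-- Nuclear norm: sum of singular values. -/
def nuclearNorm {p q : Type*} [Fintype p] [Fintype q] [DecidableEq q]
    (M : Matrix p q ℂ) : ℝ :=
  ∑ i, Real.sqrt ((Matrix.isHermitian_conjTranspose_mul_self M).eigenvalues i)

/-- Spectral norm: largest singular value. -/
def specNorm {p q : Type*} [Fintype p] [Fintype q] [DecidableEq q]
    (M : Matrix p q ℂ) : ℝ :=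
  ⨆ i, Real.sqrt ((Matrix.isHermitian_conjTranspose_mul_self M).eigenvalues i)

/-- Frobenius norm. -/
def frob {p q : Type*} [Fintype p] [Fintype q] (M : Matrix p q ℂ) : ℝ :=
  Real.sqrt (∑ i, ∑ j, ‖M i j‖ ^ 2)

/-- Frobenius inner product `⟨P,Q⟩ = Tr(P* Q)`. -/
def finner {p q : Type*} [Fintype p] [Fintype q] (P Q : Matrix p q ℂ) : ℂ :=
  ∑ i, ∑ j, (starRingEnd ℂ) (P i j) * Q i j

/-- Elementwise ℓ1 norm. -/
def l1norm {p q : Type*} [Fintype p] [Fintype q] (M : Matrix p q ℂ) : ℝ :=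
  ∑ i, ∑ j, ‖M i j‖

/-- `P_Ω`: keep entries on `Ω`, zero elsewhere. -/
def projOmega {n1 n2 : ℕ} (Ω : Finset (Fin n1 × Fin n2))
    (M : Matrix (Fin n1) (Fin n2) ℂ) : Matrix (Fin n1) (Fin n2) ℂ :=
  Matrix.of fun k l => if (k, l) ∈ Ω then M k l else 0

/-- `ω_{k,l} = |Ω_e(k,l)|`. -/
def wcount (n1 n2 k1 k2 : ℕ) (a : Fin n1 × Fin n2) : ℕ :=
  (Finset.univ.filter fun e : (Fin k1 × Fin k2) × (Fin (n1 - k1 + 1) × Fin (n2 - k2 + 1)) =>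
    e.1.1.1 + e.2.1.1 = (a.1 : ℕ) ∧ e.1.2.1 + e.2.2.1 = (a.2 : ℕ)).card

/-- The basis matrix `A_{(k,l)}`: `1/√ω_{k,l}` on `Ω_e(k,l)` and `0` elsewhere. -/
def Amat (n1 n2 k1 k2 : ℕ) (a : Fin n1 × Fin n2) :
    Matrix (Fin k1 × Fin k2) (Fin (n1 - k1 + 1) × Fin (n2 - k2 + 1)) ℂ :=
  Matrix.of fun ip jq =>
    if ip.1.1 + jq.1.1 = (a.1 : ℕ) ∧ ip.2.1 + jq.2.1 = (a.2 : ℕ) then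
      (((Real.sqrt (wcount n1 n2 k1 k2 a))⁻¹ : ℝ) : ℂ) else 0

/-- `A_a(M) = ⟨A_a, M⟩ A_a`. -/
def AopS (n1 n2 k1 k2 : ℕ) (a : Fin n1 × Fin n2)
    (M : Matrix (Fin k1 × Fin k2) (Fin (n1 - k1 + 1) × Fin (n2 - k2 + 1)) ℂ) :
    Matrix (Fin k1 × Fin k2) (Fin (n1 - k1 + 1) × Fin (n2 - k2 + 1)) ℂ :=
  finner (Amat n1 n2 k1 k2 a) M • Amat n1 n2 k1 k2 a

/-- `A = Σ_{(k,l)} A_{(k,l)}`: the projection onto the span of the `A_{(k,l)}`. -/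
def Aproj (n1 n2 k1 k2 : ℕ)
    (M : Matrix (Fin k1 × Fin k2) (Fin (n1 - k1 + 1) × Fin (n2 - k2 + 1)) ℂ) :
    Matrix (Fin k1 × Fin k2) (Fin (n1 - k1 + 1) × Fin (n2 - k2 + 1)) ℂ :=
  ∑ a : Fin n1 × Fin n2, AopS n1 n2 k1 k2 a M

/-- `Σ_{a ∈ s} A_a` over a (finite) set `s` of distinct indices. -/
def AprojSet (n1 n2 k1 k2 : ℕ) (s : Finset (Fin n1 × Fin n2))
    (M : Matrix (Fin k1 × Fin k2) (Fin (n1 - k1 + 1) × Fin (n2 - k2 + 1)) ℂ) :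
    Matrix (Fin k1 × Fin k2) (Fin (n1 - k1 + 1) × Fin (n2 - k2 + 1)) ℂ :=
  ∑ a ∈ s, AopS n1 n2 k1 k2 a M

/-- `A_Ω = Σ_{i} A_{a_i}` (with multiplicity) for a multiset of samples given
as a tuple `a : Fin m → Fin n1 × Fin n2`. -/
def AopTuple (n1 n2 k1 k2 m : ℕ) (a : Fin m → Fin n1 × Fin n2)
    (M : Matrix (Fin k1 × Fin k2) (Fin (n1 - k1 + 1) × Fin (n2 - k2 + 1)) ℂ) :
    Matrix (Fin k1 × Fin k2) (Fin (n1 - k1 + 1) × Fin (n2 - k2 + 1)) ℂ :=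
  ∑ i : Fin m, AopS n1 n2 k1 k2 (a i) M

/-- `P_T(M) = U U* M + M V V* − U U* M V V*`, the projection onto the
tangent space `T = {U M* + M̃ V*}`. -/
def projT {p q : Type*} [Fintype p] [Fintype q] {r' : ℕ}
    (U : Matrix p (Fin r') ℂ) (V : Matrix q (Fin r') ℂ) (M : Matrix p q ℂ) :
    Matrix p q ℂ :=
  U * Uᴴ * M + M * (V * Vᴴ) - U * Uᴴ * M * (V * Vᴴ)

/-- `X_e = U Λ V*` is a compact SVD with positive singular values `σ`. -/
structure CompactSVD {p q : Type*} [Fintype p] [Fintype q] {r' : ℕ}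
    (Xe : Matrix p q ℂ) (U : Matrix p (Fin r') ℂ) (σ : Fin r' → ℝ)
    (V : Matrix q (Fin r') ℂ) : Prop where
  U_orth : Uᴴ * U = 1
  V_orth : Vᴴ * V = 1
  sigma_pos : ∀ i, 0 < σ i
  decomp : Xe = U * Matrix.diagonal (fun i => ((σ i : ℝ) : ℂ)) * Vᴴ

/-- `‖M‖_{A,2}²`. -/
def Anorm2sq (n1 n2 k1 k2 : ℕ)
    (M : Matrix (Fin k1 × Fin k2) (Fin (n1 - k1 + 1) × Fin (n2 - k2 + 1)) ℂ) : ℝ :=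
  ∑ a : Fin n1 × Fin n2, ‖finner (Amat n1 n2 k1 k2 a) M‖ ^ 2 / (wcount n1 n2 k1 k2 a : ℝ)

/-- `‖M‖_{A,∞}`. -/
def AnormInf (n1 n2 k1 k2 : ℕ)
    (M : Matrix (Fin k1 × Fin k2) (Fin (n1 - k1 + 1) × Fin (n2 - k2 + 1)) ℂ) : ℝ :=
  ⨆ a : Fin n1 × Fin n2,
    ‖finner (Amat n1 n2 k1 k2 a) M‖ / Real.sqrt (wcount n1 n2 k1 k2 a)

/-- Complex sign. -/
def csgn (z : ℂ) : ℂ := if z = 0 then 0 else z / (‖z‖ : ℂ)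

/-- Entrywise complex sign of a matrix. -/
def matSgn {p q : Type*} (M : Matrix p q ℂ) : Matrix p q ℂ :=
  Matrix.of fun i j => csgn (M i j)

end EMaC

namespace EMaC

/-- The set of distinct sample locations of the sample tuple (multiset) `a`. -/
def sampleSet {n1 n2 m : ℕ} (a : Fin m → Fin n1 × Fin n2) : Finset (Fin n1 × Fin n2) :=
  Finset.image a Finset.univ

/-- The set of distinct locations among the first `mclean` samples of `a`. -/
def cleanSet {n1 n2 m : ℕ} (mclean : ℕ) (a : Fin m → Fin n1 × Fin n2) :
    Finset (Fin n1 × Fin n2) :=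
  Finset.image a (Finset.univ.filter fun i => (i : ℕ) < mclean)

/-- `Ω^dirty`: distinct locations of `a` not among the first `mclean` (clean) samples. -/
def dirtySet {n1 n2 m : ℕ} (mclean : ℕ) (a : Fin m → Fin n1 × Fin n2) :
    Finset (Fin n1 × Fin n2) :=
  sampleSet a \ cleanSet mclean a

/-- `A_{Ω^clean}` (with multiplicity): sum over the first `mclean` samples. -/
def AopClean (n1 n2 k1 k2 m mclean : ℕ) (a : Fin m → Fin n1 × Fin n2)
    (M : Matrix (Fin k1 × Fin k2) (Fin (n1 - k1 + 1) × Fin (n2 - k2 + 1)) ℂ) :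
    Matrix (Fin k1 × Fin k2) (Fin (n1 - k1 + 1) × Fin (n2 - k2 + 1)) ℂ :=
  ∑ i ∈ Finset.univ.filter (fun i : Fin m => (i : ℕ) < mclean), AopS n1 n2 k1 k2 (a i) M

/-- The Robust-EMaC objective `‖M_e‖_* + λ ‖Ŝ_e‖_1`. -/
def robustObj (n1 n2 k1 k2 : ℕ) (hk1' : k1 ≤ n1) (hk2' : k2 ≤ n2) (lam : ℝ)
    (M S : Matrix (Fin n1) (Fin n2) ℂ) : ℝ :=
  nuclearNorm (enhance k1 k2 hk1' hk2' M) + lam * l1norm (enhance k1 k2 hk1' hk2' S)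

/-- `(M̂, Ŝ)` is a minimizer of Robust-EMaC with observations `P_Ω(X + S)`. -/
def RobustMinimizer (n1 n2 k1 k2 : ℕ) (hk1' : k1 ≤ n1) (hk2' : k2 ≤ n2) (lam : ℝ)
    (Ω : Finset (Fin n1 × Fin n2)) (X S Mhat Shat : Matrix (Fin n1) (Fin n2) ℂ) : Prop :=
  projOmega Ω (Mhat + Shat) = projOmega Ω (X + S) ∧
    ∀ M' S' : Matrix (Fin n1) (Fin n2) ℂ,
      projOmega Ω (M' + S') = projOmega Ω (X + S) →
      robustObj n1 n2 k1 k2 hk1' hk2' lam Mhat Shat ≤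
        robustObj n1 n2 k1 k2 hk1' hk2' lam M' S'

/-- `X` is the unique solution of the EMaC program with observed entries `Ω`:
every feasible `M` is either `X` itself or has strictly larger enhanced
nuclear norm. -/
def UniqueEMaCSolution (n1 n2 k1 k2 : ℕ) (hk1' : k1 ≤ n1) (hk2' : k2 ≤ n2)
    (Ω : Finset (Fin n1 × Fin n2)) (X : Matrix (Fin n1) (Fin n2) ℂ) : Prop :=
  ∀ M : Matrix (Fin n1) (Fin n2) ℂ,
    (∀ e ∈ Ω, M e.1 e.2 = X e.1 e.2) →
    M = X ∨
      nuclearNorm (enhance k1 k2 hk1' hk2' X) < nuclearNorm (enhance k1 k2 hk1' hk2' M)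

/-- `sgn(S)` in the random-sign outlier model: the random sign `K` on `Ω^dirty`
and zero elsewhere. -/
def dirtySign {n1 n2 m : ℕ} (mclean : ℕ) (a : Fin m → Fin n1 × Fin n2)
    (K : Fin n1 × Fin n2 → ℂ) : Matrix (Fin n1) (Fin n2) ℂ :=
  Matrix.of fun α β => if (α, β) ∈ dirtySet mclean a then K (α, β) else 0

end EMaC


/-! The enhanced matrix factors through the Vandermonde-type matrices, `X_e = E_L D E_R`, so
`U = E_L W` and `V = E_Rᴴ W'`. Because `U` has orthonormal columns and `‖E_L y‖² ≥ ‖y‖² / μ1`,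
each row of `U` satisfies `‖U_a‖² ≤ μ1 ‖(E_L)_a‖² = μ1 r / (k1 k2)`; likewise
`‖V_b‖² ≤ μ1 r / ((n1 - k1 + 1)(n2 - k2 + 1))`, and both are at most `μ1 c_s r / (n1 n2)`.
Cauchy–Schwarz then bounds every entry of `U V*`, and `⟨A_{(k,l)}, U V*⟩ / √ω_{k,l}` is an
average of entries. -/

open scoped ComplexOrder

theorem norm_sum_mul_sq_le {R ι : Type*} [SeminormedRing R] (s : Finset ι) (a b : ι → R) :
    ‖∑ i ∈ s, a i * b i‖ ^ 2 ≤ (∑ i ∈ s, ‖a i‖ ^ 2) * ∑ i ∈ s, ‖b i‖ ^ 2 :=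
  calc ‖∑ i ∈ s, a i * b i‖ ^ 2 ≤ (∑ i ∈ s, ‖a i‖ * ‖b i‖) ^ 2 := by
        gcongr
        exact (norm_sum_le _ _).trans (Finset.sum_le_sum fun i _ => norm_mul_le _ _)
    _ ≤ _ := Finset.sum_mul_sq_le_sq_mul_sq _ _ _

namespace Matrix

variable {m n l 𝕜 : Type*} [RCLike 𝕜]

theorem norm_mul_conjTranspose_apply_sq_le [Fintype l] (U : Matrix m l 𝕜) (V : Matrix n l 𝕜)
    (a : m) (b : n) : ‖(U * Vᴴ) a b‖ ^ 2 ≤ (∑ t, ‖U a t‖ ^ 2) * ∑ t, ‖V b t‖ ^ 2 := by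
  simpa [mul_apply] using norm_sum_mul_sq_le Finset.univ (U a) (fun t => star (V b t))

variable [Fintype m] [Fintype n] [Fintype l]

theorem re_star_dotProduct_self (x : n → 𝕜) :
    RCLike.re (star x ⬝ᵥ x) = ∑ i, ‖x i‖ ^ 2 := by
  simp only [dotProduct, Pi.star_apply, RCLike.star_def, RCLike.conj_mul, map_sum]
  norm_cast

theorem re_star_dotProduct_conjTranspose_mul_self_mulVec (M : Matrix m n 𝕜) (x : n → 𝕜) :
    RCLike.re (star x ⬝ᵥ (Mᴴ * M) *ᵥ x) = ∑ j, ‖(M *ᵥ x) j‖ ^ 2 := by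
  rw [← mulVec_mulVec, dotProduct_mulVec, ← star_mulVec, re_star_dotProduct_self]

theorem sum_norm_sq_conjTranspose_mulVec (M : Matrix m n 𝕜) (y : m → 𝕜) :
    ∑ j, ‖(Mᴴ *ᵥ y) j‖ ^ 2 = ∑ j, ‖(Mᵀ *ᵥ star y) j‖ ^ 2 := by
  have : Mᴴ *ᵥ y = star (Mᵀ *ᵥ star y) := by
    ext j
    simp [mulVec, dotProduct, mul_comm]
  simp [this]

theorem IsHermitian.posSemidef_sub_smul_one_of_le_eigenvalues [DecidableEq n]
    {A : Matrix n n 𝕜} (hA : A.IsHermitian) {c : ℝ} (h : ∀ i, c ≤ hA.eigenvalues i) :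
    (A - (c : 𝕜) • 1).PosSemidef := by
  have hdiag : A - (c : 𝕜) • 1 = Unitary.conjStarAlgAut 𝕜 _ hA.eigenvectorUnitary
      (diagonal (RCLike.ofReal ∘ fun i => hA.eigenvalues i - c)) := by
    conv_lhs => rw [hA.spectral_theorem]
    rw [← map_one (Unitary.conjStarAlgAut 𝕜 _ hA.eigenvectorUnitary), ← map_smul, ← map_sub]
    congr 1
    ext i j
    by_cases hij : i = j <;> simp [hij, Algebra.algebraMap_eq_smul_one, sub_smul]
  rw [hdiag, Unitary.conjStarAlgAut_apply, Unitary.isUnit_coe.posSemidef_star_right_conjugate_iff,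
    posSemidef_diagonal_iff]
  intro i
  simpa using h i

theorem IsHermitian.mul_sum_norm_sq_le_re_dotProduct_mulVec [DecidableEq n] {A : Matrix n n 𝕜}
    (hA : A.IsHermitian) {c : ℝ} (h : ∀ i, c ≤ hA.eigenvalues i) (x : n → 𝕜) :
    c * ∑ i, ‖x i‖ ^ 2 ≤ RCLike.re (star x ⬝ᵥ A *ᵥ x) := by
  have := (hA.posSemidef_sub_smul_one_of_le_eigenvalues h).re_dotProduct_nonneg x
  rw [sub_mulVec, dotProduct_sub, smul_mulVec, one_mulVec, dotProduct_smul, map_sub,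
    smul_eq_mul, RCLike.re_ofReal_mul, re_star_dotProduct_self] at this
  linarith

/-- With `v = star (U a)`, `‖U a‖² = (U *ᵥ v) a = ∑ s, L a s * (W *ᵥ v) s`, and
`c ‖W v‖² ≤ ‖v‖²` because `L * W = U` is an isometry. -/
theorem mul_sum_norm_sq_row_le_of_eq_mul [DecidableEq l] {U : Matrix m l 𝕜} {L : Matrix m n 𝕜}
    {W : Matrix n l 𝕜} (hU : Uᴴ * U = 1) (hUL : U = L * W) {c : ℝ} (hc : 0 ≤ c)
    (hL : ∀ y, c * ∑ i, ‖y i‖ ^ 2 ≤ ∑ j, ‖(L *ᵥ y) j‖ ^ 2) (a : m) :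
    c * ∑ t, ‖U a t‖ ^ 2 ≤ ∑ s, ‖L a s‖ ^ 2 := by
  have hW : ∀ v, c * ∑ s, ‖(W *ᵥ v) s‖ ^ 2 ≤ ∑ t, ‖v t‖ ^ 2 := fun v => by
    simpa only [mulVec_mulVec, ← hUL, ← re_star_dotProduct_conjTranspose_mul_self_mulVec, hU,
      one_mulVec, re_star_dotProduct_self] using hL (W *ᵥ v)
  set S := ∑ t, ‖U a t‖ ^ 2
  set v : l → 𝕜 := star (U a)
  have hS : (S : 𝕜) = ∑ s, L a s * (W *ᵥ v) s := by
    have h1 : (U *ᵥ v) a = S := by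
      simp [v, S, mulVec, dotProduct, RCLike.mul_conj]
    rw [← h1, hUL, ← mulVec_mulVec]
    rfl
  have hv : ∑ t, ‖v t‖ ^ 2 = S := by simp [v, S]
  have hS0 : 0 ≤ S := by positivity
  have hLa : 0 ≤ ∑ s, ‖L a s‖ ^ 2 := by positivity
  have hCS : S ^ 2 ≤ (∑ s, ‖L a s‖ ^ 2) * ∑ s, ‖(W *ᵥ v) s‖ ^ 2 := by
    simpa only [← hS, RCLike.norm_ofReal, abs_of_nonneg hS0] using
      norm_sum_mul_sq_le Finset.univ (L a) (W *ᵥ v)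
  have key : c * S ^ 2 ≤ (∑ s, ‖L a s‖ ^ 2) * S :=
    calc c * S ^ 2 ≤ (∑ s, ‖L a s‖ ^ 2) * (c * ∑ s, ‖(W *ᵥ v) s‖ ^ 2) := by nlinarith
      _ ≤ (∑ s, ‖L a s‖ ^ 2) * S := by rw [← hv]; exact mul_le_mul_of_nonneg_left (hW v) hLa
  rcases hS0.eq_or_lt with h0 | hpos
  · rw [← h0, mul_zero]
    exact hLa
  · nlinarith

end Matrix

namespace EMaC

/-- The eigenvalues of `Aᴴ * A = A ^ 2` are the squares of those of `A`, by spectral mapping. -/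
theorem le_eigenvalues_of_le_sigmaMin {n : Type*} [Fintype n] [DecidableEq n] {A : Matrix n n ℂ}
    (hA : A.PosSemidef) {c : ℝ} (h : c ≤ sigmaMin A) (i : n) : c ≤ hA.isHermitian.eigenvalues i := by
  have hB := isHermitian_conjTranspose_mul_self A
  have hsq : (hA.isHermitian.eigenvalues i : ℂ) ^ 2 ∈ spectrum ℂ (Aᴴ * A) := by
    rw [hA.isHermitian.eq, ← sq]
    exact spectrum.pow_mem_pow A 2 (hA.isHermitian.spectrum_eq_image_range ▸ ⟨_, ⟨i, rfl⟩, rfl⟩)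
  obtain ⟨_, ⟨j, rfl⟩, hj⟩ := hB.spectrum_eq_image_range ▸ hsq
  replace hj : hB.eigenvalues j = hA.isHermitian.eigenvalues i ^ 2 := by
    apply Complex.ofReal_injective
    simpa using hj
  calc c ≤ Real.sqrt (hB.eigenvalues j) := h.trans (ciInf_le (Finite.bddBelow_range _) j)
    _ = hA.isHermitian.eigenvalues i := by rw [hj, Real.sqrt_sq (hA.eigenvalues_nonneg i)]

theorem mul_sum_norm_sq_le_of_le_sigmaMin {m n : Type*} [Fintype m] [Fintype n] [DecidableEq n]
    {M : Matrix m n ℂ} {c : ℝ} (h : c ≤ sigmaMin (Mᴴ * M)) (y : n → ℂ) :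
    c * ∑ i, ‖y i‖ ^ 2 ≤ ∑ j, ‖(M *ᵥ y) j‖ ^ 2 := by
  have hA := posSemidef_conjTranspose_mul_self M
  rw [← re_star_dotProduct_conjTranspose_mul_self_mulVec]
  exact hA.isHermitian.mul_sum_norm_sq_le_re_dotProduct_mulVec (le_eigenvalues_of_le_sigmaMin hA h) y

theorem mul_sum_norm_sq_le_conjTranspose_mulVec_of_le_sigmaMin_transpose {m n : Type*}
    [Fintype m] [Fintype n] [DecidableEq m] {R : Matrix m n ℂ} {c : ℝ}
    (h : c ≤ sigmaMin (R * Rᴴ)ᵀ) (y : m → ℂ) :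
    c * ∑ i, ‖y i‖ ^ 2 ≤ ∑ j, ‖(Rᴴ *ᵥ y) j‖ ^ 2 := by
  rw [transpose_mul] at h
  simpa [sum_norm_sq_conjTranspose_mulVec] using
    mul_sum_norm_sq_le_of_le_sigmaMin (M := Rᵀ) h (star y)

theorem norm_efreq (f : ℝ) : ‖efreq f‖ = 1 := by
  rw [efreq, ← Complex.norm_exp_ofReal_mul_I (2 * Real.pi * f)]
  push_cast
  ring_nf

theorem sum_norm_sq_EL_row (r k1 k2 : ℕ) (f1 f2 : Fin r → ℝ) (a : Fin k1 × Fin k2) :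
    ∑ s, ‖EL r k1 k2 f1 f2 a s‖ ^ 2 = r / ((k1 : ℝ) * k2) := by
  simp only [EL, of_apply, norm_div, norm_mul, norm_pow, norm_efreq, one_pow, one_mul,
    Complex.norm_real, Real.norm_of_nonneg (Real.sqrt_nonneg _), div_pow,
    Real.sq_sqrt (by positivity : (0 : ℝ) ≤ k1 * k2), Finset.sum_const, Finset.card_univ,
    Fintype.card_fin, nsmul_eq_mul, mul_one_div]

theorem sum_norm_sq_ER_col (n1 n2 r k1 k2 : ℕ) (f1 f2 : Fin r → ℝ)
    (b : Fin (n1 - k1 + 1) × Fin (n2 - k2 + 1)) :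
    ∑ s, ‖ER n1 n2 r k1 k2 f1 f2 s b‖ ^ 2 =
      r / (((n1 - k1 + 1 : ℕ) : ℝ) * ((n2 - k2 + 1 : ℕ) : ℝ)) := by
  simp only [ER, of_apply, norm_div, norm_mul, norm_pow, norm_efreq, one_pow, one_mul,
    Complex.norm_real, Real.norm_of_nonneg (Real.sqrt_nonneg _), div_pow,
    Real.sq_sqrt (by positivity : (0 : ℝ) ≤ ((n1 - k1 + 1 : ℕ) : ℝ) * ((n2 - k2 + 1 : ℕ) : ℝ)),
    Finset.sum_const, Finset.card_univ, Fintype.card_fin, nsmul_eq_mul, mul_one_div]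

theorem enhance_dataMatrix_eq {n1 n2 r k1 k2 : ℕ} (hk1' : k1 ≤ n1) (hk2' : k2 ≤ n2)
    (d : Fin r → ℂ) (f1 f2 : Fin r → ℝ) :
    enhance k1 k2 hk1' hk2' (dataMatrix n1 n2 r d f1 f2) =
      EL r k1 k2 f1 f2 *
        diagonal (fun s => d s * (Real.sqrt ((k1 : ℝ) * k2) : ℂ) *
          (Real.sqrt (((n1 - k1 + 1 : ℕ) : ℝ) * ((n2 - k2 + 1 : ℕ) : ℝ)) : ℂ)) *
        ER n1 n2 r k1 k2 f1 f2 := by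
  ext ip jq
  have hK : (Real.sqrt ((k1 : ℝ) * k2) : ℂ) ≠ 0 := by
    have := ip.1.pos
    have := ip.2.pos
    norm_cast
    positivity
  have hN : (Real.sqrt (((n1 - k1 + 1 : ℕ) : ℝ) * ((n2 - k2 + 1 : ℕ) : ℝ)) : ℂ) ≠ 0 := by
    norm_cast
    positivity
  rw [mul_apply]
  simp only [mul_diagonal, enhance, dataMatrix, EL, ER, of_apply]
  refine Finset.sum_congr rfl fun s _ => ?_
  field_simp
  ring

section CompactSVD

variable {p q : Type*} [Fintype p] [Fintype q] {r' : ℕ} {Xe : Matrix p q ℂ}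
  {U : Matrix p (Fin r') ℂ} {σ : Fin r' → ℝ} {V : Matrix q (Fin r') ℂ}

theorem CompactSVD.diagonal_mul_diagonal_inv (h : CompactSVD Xe U σ V) :
    diagonal (fun i => ((σ i : ℝ) : ℂ)) * diagonal (fun i => (((σ i)⁻¹ : ℝ) : ℂ)) = 1 := by
  rw [diagonal_mul_diagonal, ← diagonal_one]
  congr 1
  ext i
  rw [← Complex.ofReal_mul, mul_inv_cancel₀ (h.sigma_pos i).ne', Complex.ofReal_one]

theorem CompactSVD.mul_mul_diagonal_inv (h : CompactSVD Xe U σ V) :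
    Xe * V * diagonal (fun i => (((σ i)⁻¹ : ℝ) : ℂ)) = U := by
  rw [h.decomp, Matrix.mul_assoc _ Vᴴ V, h.V_orth, Matrix.mul_one, Matrix.mul_assoc,
    h.diagonal_mul_diagonal_inv, Matrix.mul_one]

theorem CompactSVD.conjTranspose_mul_mul_diagonal_inv (h : CompactSVD Xe U σ V) :
    Xeᴴ * U * diagonal (fun i => (((σ i)⁻¹ : ℝ) : ℂ)) = V := by
  have hΛ : (diagonal (fun i => ((σ i : ℝ) : ℂ)))ᴴ = diagonal (fun i => ((σ i : ℝ) : ℂ)) := by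
    simp [diagonal_conjTranspose]
  rw [h.decomp, conjTranspose_mul, conjTranspose_mul, conjTranspose_conjTranspose, hΛ]
  simp only [Matrix.mul_assoc]
  rw [← Matrix.mul_assoc Uᴴ U, h.U_orth, Matrix.one_mul, h.diagonal_mul_diagonal_inv,
    Matrix.mul_one]

theorem CompactSVD.exists_U_eq_mul (h : CompactSVD Xe U σ V) {k : Type*} [Fintype k]
    {L : Matrix p k ℂ} {B : Matrix k q ℂ} (hX : Xe = L * B) : ∃ W, U = L * W :=
  ⟨_, by rw [← h.mul_mul_diagonal_inv, hX, Matrix.mul_assoc L, Matrix.mul_assoc L]; rfl⟩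

theorem CompactSVD.exists_V_eq_conjTranspose_mul (h : CompactSVD Xe U σ V) {k : Type*}
    [Fintype k] {B : Matrix p k ℂ} {R : Matrix k q ℂ} (hX : Xe = B * R) : ∃ W, V = Rᴴ * W :=
  ⟨_, by
    rw [← h.conjTranspose_mul_mul_diagonal_inv, hX, conjTranspose_mul, Matrix.mul_assoc Rᴴ,
      Matrix.mul_assoc Rᴴ]
    rfl⟩

end CompactSVD

theorem sum_norm_Amat (n1 n2 k1 k2 : ℕ) (a : Fin n1 × Fin n2) :
    ∑ ip, ∑ jq, ‖Amat n1 n2 k1 k2 a ip jq‖ = Real.sqrt (wcount n1 n2 k1 k2 a) := by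
  simp only [Amat, of_apply, apply_ite norm, Complex.norm_real, norm_zero,
    Real.norm_of_nonneg (inv_nonneg.2 (Real.sqrt_nonneg _))]
  rw [← Fintype.sum_prod_type', Finset.sum_ite, Finset.sum_const_zero, add_zero,
    Finset.sum_const, nsmul_eq_mul, ← wcount, ← div_eq_mul_inv, Real.div_sqrt]

theorem AnormInf_le_of_norm_le {n1 n2 k1 k2 : ℕ}
    {M : Matrix (Fin k1 × Fin k2) (Fin (n1 - k1 + 1) × Fin (n2 - k2 + 1)) ℂ} {β : ℝ}
    (hβ : 0 ≤ β) (h : ∀ ip jq, ‖M ip jq‖ ≤ β) : AnormInf n1 n2 k1 k2 M ≤ β := by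
  refine Real.iSup_le (fun a => div_le_of_le_mul₀ (Real.sqrt_nonneg _) hβ ?_) hβ
  calc ‖finner (Amat n1 n2 k1 k2 a) M‖
      ≤ ∑ ip, ∑ jq, ‖Amat n1 n2 k1 k2 a ip jq‖ * β := by
        refine (norm_sum_le _ _).trans (Finset.sum_le_sum fun ip _ => ?_)
        refine (norm_sum_le _ _).trans (Finset.sum_le_sum fun jq _ => ?_)
        rw [norm_mul, RCLike.norm_conj]
        exact mul_le_mul_of_nonneg_left (h ip jq) (norm_nonneg _)
    _ = β * Real.sqrt (wcount n1 n2 k1 k2 a) := by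
        rw [← sum_norm_Amat, mul_comm, Finset.sum_mul]
        simp_rw [Finset.sum_mul]

theorem cs_nonneg (n1 n2 k1 k2 : ℕ) : 0 ≤ cs n1 n2 k1 k2 :=
  (by positivity : (0 : ℝ) ≤ (n1 * n2) / (k1 * k2)).trans (le_max_left _ _)

theorem le_mul_cs_mul_div_of_one_div_mul_le {n1 n2 k1 k2 r : ℕ} {μ1 x S : ℝ}
    (hn : (0 : ℝ) < n1 * n2) (hμ1 : 0 < μ1) (hx : n1 * n2 / x ≤ cs n1 n2 k1 k2)
    (hS : 1 / μ1 * S ≤ r / x) : S ≤ μ1 * cs n1 n2 k1 k2 * r / (n1 * n2) := by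
  rw [one_div, inv_mul_le_iff₀ hμ1] at hS
  calc S ≤ μ1 * (r / x) := hS
    _ = μ1 * (n1 * n2 / x * r / (n1 * n2)) := by
      obtain ⟨h1, h2⟩ := mul_ne_zero_iff.1 hn.ne'
      field_simp
    _ ≤ μ1 * (cs n1 n2 k1 k2 * r / (n1 * n2)) := by gcongr
    _ = μ1 * cs n1 n2 k1 k2 * r / (n1 * n2) := by ring

end EMaC

open EMaC in
theorem UV_AnormInf_bound_general
    (n1 n2 r r' k1 k2 : ℕ) (hn1 : 0 < n1) (hn2 : 0 < n2)
    (hk1' : k1 ≤ n1) (hk2' : k2 ≤ n2)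
    (d : Fin r → ℂ) (f1 f2 : Fin r → ℝ)
    (μ1 : ℝ) (hμ1 : 0 < μ1)
    (hinc : Incoherent n1 n2 r k1 k2 f1 f2 μ1)
    (U : Matrix (Fin k1 × Fin k2) (Fin r') ℂ) (σ : Fin r' → ℝ)
    (V : Matrix (Fin (n1 - k1 + 1) × Fin (n2 - k2 + 1)) (Fin r') ℂ)
    (hsvd : CompactSVD (enhance k1 k2 hk1' hk2' (dataMatrix n1 n2 r d f1 f2)) U σ V) :
    AnormInf n1 n2 k1 k2 (U * Vᴴ) ≤ μ1 * cs n1 n2 k1 k2 * r / ((n1 : ℝ) * n2) ∧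
      ∀ (ip : Fin k1 × Fin k2) (jq : Fin (n1 - k1 + 1) × Fin (n2 - k2 + 1)),
        ‖(U * Vᴴ) ip jq‖ ≤ μ1 * cs n1 n2 k1 k2 * r / ((n1 : ℝ) * n2) := by
  set β := μ1 * cs n1 n2 k1 k2 * r / ((n1 : ℝ) * n2)
  have hnn : (0 : ℝ) < n1 * n2 := by positivity
  have hβ : 0 ≤ β := by have := cs_nonneg n1 n2 k1 k2; positivity
  have hXe := enhance_dataMatrix_eq hk1' hk2' d f1 f2
  obtain ⟨W, hUW⟩ := hsvd.exists_U_eq_mul (hXe.trans (Matrix.mul_assoc _ _ _))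
  obtain ⟨W', hVW⟩ := hsvd.exists_V_eq_conjTranspose_mul hXe
  have hU (a) : ∑ t, ‖U a t‖ ^ 2 ≤ β :=
    le_mul_cs_mul_div_of_one_div_mul_le hnn hμ1 (le_max_left _ _) <| by
      simpa only [sum_norm_sq_EL_row] using mul_sum_norm_sq_row_le_of_eq_mul hsvd.U_orth hUW
        (by positivity) (mul_sum_norm_sq_le_of_le_sigmaMin hinc.1) a
  have hV (b) : ∑ t, ‖V b t‖ ^ 2 ≤ β :=
    le_mul_cs_mul_div_of_one_div_mul_le hnn hμ1 (le_max_right _ _) <| by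
      simpa only [conjTranspose_apply, norm_star, sum_norm_sq_ER_col] using
        mul_sum_norm_sq_row_le_of_eq_mul hsvd.V_orth hVW (by positivity)
          (mul_sum_norm_sq_le_conjTranspose_mulVec_of_le_sigmaMin_transpose hinc.2) b
  have hentry (ip jq) : ‖(U * Vᴴ) ip jq‖ ≤ β := by
    refine (pow_le_pow_iff_left₀ (norm_nonneg _) hβ two_ne_zero).1 ?_
    calc ‖(U * Vᴴ) ip jq‖ ^ 2 ≤ (∑ t, ‖U ip t‖ ^ 2) * ∑ t, ‖V jq t‖ ^ 2 :=
          norm_mul_conjTranspose_apply_sq_le U V ip jq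
      _ ≤ β ^ 2 := by rw [sq]; exact mul_le_mul (hU ip) (hV jq) (by positivity) hβ
  exact ⟨AnormInf_le_of_norm_le hβ hentry, hentry⟩

open EMaC in
/-- Lemma 8, part 1: under the incoherence property,
`‖U V*‖_{A,∞} ≤ μ1 c_s r/(n1 n2)`, and in fact every entry of `U V*` has
modulus at most `μ1 c_s r/(n1 n2)`. -/
theorem UV_AnormInf_bound
    (n1 n2 r r' k1 k2 : ℕ) (hn1 : 0 < n1) (hn2 : 0 < n2) (hr : 0 < r)
    (hk1 : 1 ≤ k1) (hk1' : k1 ≤ n1) (hk2 : 1 ≤ k2) (hk2' : k2 ≤ n2)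
    (d : Fin r → ℂ) (f1 f2 : Fin r → ℝ)
    (hmodel : SpectralModel r f1 f2)
    (μ1 : ℝ) (hμ1 : 0 < μ1)
    (hinc : Incoherent n1 n2 r k1 k2 f1 f2 μ1)
    (U : Matrix (Fin k1 × Fin k2) (Fin r') ℂ) (σ : Fin r' → ℝ)
    (V : Matrix (Fin (n1 - k1 + 1) × Fin (n2 - k2 + 1)) (Fin r') ℂ)
    (hsvd : CompactSVD (enhance k1 k2 hk1' hk2' (dataMatrix n1 n2 r d f1 f2)) U σ V) :
    AnormInf n1 n2 k1 k2 (U * Vᴴ) ≤ μ1 * cs n1 n2 k1 k2 * r / ((n1 : ℝ) * n2) ∧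
      ∀ (ip : Fin k1 × Fin k2) (jq : Fin (n1 - k1 + 1) × Fin (n2 - k2 + 1)),
        ‖(U * Vᴴ) ip jq‖ ≤ μ1 * cs n1 n2 k1 k2 * r / ((n1 : ℝ) * n2) :=
  UV_AnormInf_bound_general n1 n2 r r' k1 k2 hn1 hn2 hk1' hk2' d f1 f2 μ1 hμ1 hinc U σ V hsvd
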